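/- Let T = ⟨Γ, L, R⟩ be an incremental rule system on presheaves over a small category C, with Γ small, and let p be a presheaf. Then T is accretive at p: for any two partial decompositions M ⊆ M' of p, the induced morphism T̃_p(M) ⟶ T̃_p(M') — the unique morphism commuting with the colimit components, i.e. sending the component of T̃_p(M) at each object n of M̃ to the component of T̃_p(M') at n — is a monomorphism. -/

import Mathlib

/-!
Evaluated at `c : Cᵒᵖ`, a colimit of presheaves is the quotient of `Σ n, R(n)(c)` by the
equivalence relation generated by `x ~ R(e) x`. Incrementality turns every cospan of instances
carrying a common element into a span, so this generated relation is already "both elements are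
images of one element `x₀ ∈ R(n₀)(c)`". If two elements coming from `M̃` are identified in
`T̃_p(M')`, such an `n₀` exists; it maps into an element of `M`, hence lies in `M̃`, and the two
elements are already identified in `T̃_p(M)` through it.
-/

open CategoryTheory CategoryTheory.Limits

universe u

variable (C : Type u) [SmallCategory C]

/-- The category of presheaves over `C`. -/
abbrev GM := Cᵒᵖ ⥤ Type u

/-- A rule system `⟨Γ, L, R⟩` on presheaves over `C`: a small category `Γ` of rules,
a full and faithful left-hand-side functor `L` sending every morphism to a monomorphism,
and a right-hand-side functor `R` sending every morphism to a monomorphism. -/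
structure RuleSystem where
  Γ : Type u
  [catΓ : SmallCategory Γ]
  L : Γ ⥤ GM C
  R : Γ ⥤ GM C
  [fullL : L.Full]
  [faithfulL : L.Faithful]
  monoL : ∀ {a b : Γ} (e : a ⟶ b), Mono (L.map e)
  monoR : ∀ {a b : Γ} (e : a ⟶ b), Mono (R.map e)

attribute [instance] RuleSystem.catΓ RuleSystem.fullL RuleSystem.faithfulL

variable {C}

/-- The instance category `L/p`: objects are pairs `⟨γ, m⟩` with `m : L(γ) ⟶ p` a
monomorphism; morphisms `⟨γ, m⟩ ⟶ ⟨γ', m'⟩` are the morphisms `e : γ ⟶ γ'` of `Γ` with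
`m' ∘ L(e) = m`. -/
def Inst (T : RuleSystem C) (p : GM C) :=
  ObjectProperty.FullSubcategory (fun f : CostructuredArrow T.L p => Mono f.hom)

instance (T : RuleSystem C) (p : GM C) : Category (Inst T p) :=
  ObjectProperty.FullSubcategory.category _

/-- The diagram `D_T(p) : L/p ⥤ GM` sending `⟨γ, m⟩` to `R(γ)` and `e` to `R(e)`. -/
def DT (T : RuleSystem C) (p : GM C) : Inst T p ⥤ GM C :=
  ObjectProperty.ι _ ⋙ CostructuredArrow.proj T.L p ⋙ T.R

/-- An object of the instance category is maximal if every morphism out of it admits a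
morphism back. -/
def MaximalInst {T : RuleSystem C} {p : GM C} (n : Inst T p) : Prop :=
  ∀ m : Inst T p, (n ⟶ m) → Nonempty (m ⟶ n)

/-- Objects of the subcategory `M̃` associated to a set `M` of instances: the elements of
`M` together with all instances admitting a morphism into some element of `M`. -/
def InTilde {T : RuleSystem C} {p : GM C} (M : Set (Inst T p)) (n : Inst T p) : Prop :=
  n ∈ M ∨ ∃ m ∈ M, Nonempty (n ⟶ m)

theorem inTilde_mono {T : RuleSystem C} {p : GM C} {M M' : Set (Inst T p)} (h : M ⊆ M')
    {n : Inst T p} : InTilde M n → InTilde M' n := by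
  rintro (hn | ⟨m, hm, hnm⟩)
  · exact Or.inl (h hn)
  · exact Or.inr ⟨m, h hm, hnm⟩

/-- The subcategory `M̃` of `L/p`: its objects are the elements of `M` together with all
instances admitting a morphism into some element of `M`; its non-identity morphisms are the
morphisms of `L/p` whose target lies in `M`. -/
def TildeCat (T : RuleSystem C) (p : GM C) (M : Set (Inst T p)) :=
  {n : Inst T p // InTilde M n}

instance (T : RuleSystem C) (p : GM C) (M : Set (Inst T p)) : Category (TildeCat T p M) where
  Hom n n' := {e : n.1 ⟶ n'.1 // n'.1 ∈ M ∨ n = n'}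
  id n := ⟨𝟙 n.1, Or.inr rfl⟩
  comp {n n' n''} e f := ⟨e.1 ≫ f.1, by
    rcases f.2 with h | h
    · exact Or.inl h
    · rcases e.2 with h' | h'
      · exact Or.inl (h ▸ h')
      · exact Or.inr (h'.trans h)⟩
  id_comp f := Subtype.ext (Category.id_comp _)
  comp_id f := Subtype.ext (Category.comp_id _)
  assoc f g h := Subtype.ext (Category.assoc _ _ _)

/-- The inclusion of the subcategory `M̃` into the instance category `L/p`. -/
def tildeIncl (T : RuleSystem C) (p : GM C) (M : Set (Inst T p)) :
    TildeCat T p M ⥤ Inst T p where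
  obj n := n.1
  map e := e.1

/-- The restriction of the diagram `D_T(p)` to the subcategory `M̃`. -/
def DTilde (T : RuleSystem C) (p : GM C) (M : Set (Inst T p)) : TildeCat T p M ⥤ GM C :=
  tildeIncl T p M ⋙ DT T p

section PresheafColimit

variable {J : Type u} [SmallCategory J] {K : Type*} [Category K] (F : J ⥤ K ⥤ Type u) (k : K)

theorem colimit_ι_app_apply (j : J) (x : (F.obj j).obj k) :
    (colimit.ι F j).app k x =
      (colimitObjIsoColimitCompEvaluation F k).inv (colimit.ι (F ⋙ (evaluation K _).obj k) j x) :=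
  (ConcreteCategory.congr_hom (colimitObjIsoColimitCompEvaluation_ι_inv F j k) x).symm

theorem colimit_ι_app_jointly_surjective (a : (colimit F).obj k) :
    ∃ (j : J) (x : (F.obj j).obj k), (colimit.ι F j).app k x = a := by
  obtain ⟨j, x, hx⟩ := Types.jointly_surjective' ((colimitObjIsoColimitCompEvaluation F k).hom a)
  refine ⟨j, x, ?_⟩
  rw [colimit_ι_app_apply, hx, Iso.hom_inv_id_apply]

variable {F k}

theorem colimit_ι_app_sound' {j j' j'' : J} {x : (F.obj j).obj k} {x' : (F.obj j').obj k}
    (g : j ⟶ j'') (g' : j' ⟶ j'') (w : (F.map g).app k x = (F.map g').app k x') :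
    (colimit.ι F j).app k x = (colimit.ι F j').app k x' := by
  rw [colimit_ι_app_apply, colimit_ι_app_apply,
    Types.colimit_sound' (F := F ⋙ (evaluation K _).obj k) g g' w]

theorem eqvGen_of_colimit_ι_app_eq {j j' : J} {x : (F.obj j).obj k} {x' : (F.obj j').obj k}
    (h : (colimit.ι F j).app k x = (colimit.ι F j').app k x') :
    Relation.EqvGen (F ⋙ (evaluation K _).obj k).ColimitTypeRel ⟨j, x⟩ ⟨j', x'⟩ := by
  rw [colimit_ι_app_apply, colimit_ι_app_apply] at h
  exact Types.colimit_eq ((colimitObjIsoColimitCompEvaluation F k).toEquiv.symm.injective h)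

end PresheafColimit

def RuleSystem.Incremental (T : RuleSystem C) : Prop :=
  ∀ {γ₁ γ γ₂ : T.Γ} (i₁ : γ₁ ⟶ γ) (i₂ : γ₂ ⟶ γ) (c : C)
      (x₁ : yoneda.obj c ⟶ T.R.obj γ₁) (x₂ : yoneda.obj c ⟶ T.R.obj γ₂),
      x₁ ≫ T.R.map i₁ = x₂ ≫ T.R.map i₂ →
      ∃ (γ' : T.Γ) (π₁ : γ' ⟶ γ₁) (π₂ : γ' ⟶ γ₂) (x : yoneda.obj c ⟶ T.R.obj γ'),
        π₁ ≫ i₁ = π₂ ≫ i₂ ∧ x ≫ T.R.map π₁ = x₁ ∧ x ≫ T.R.map π₂ = x₂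

variable {T : RuleSystem C} {p : GM C}

theorem RuleSystem.Incremental.exists_span_apply (hT : T.Incremental) {γ₁ γ γ₂ : T.Γ}
    (i₁ : γ₁ ⟶ γ) (i₂ : γ₂ ⟶ γ) (c : Cᵒᵖ)
    (x₁ : (T.R.obj γ₁).obj c) (x₂ : (T.R.obj γ₂).obj c)
    (h : (T.R.map i₁).app c x₁ = (T.R.map i₂).app c x₂) :
    ∃ (γ' : T.Γ) (π₁ : γ' ⟶ γ₁) (π₂ : γ' ⟶ γ₂) (x : (T.R.obj γ').obj c),
      π₁ ≫ i₁ = π₂ ≫ i₂ ∧ (T.R.map π₁).app c x = x₁ ∧ (T.R.map π₂).app c x = x₂ := by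
  obtain ⟨γ', π₁, π₂, x, hπ, hx₁, hx₂⟩ :=
    hT i₁ i₂ c.unop (yonedaEquiv.symm x₁) (yonedaEquiv.symm x₂) <| yonedaEquiv.injective <| by
      rwa [yonedaEquiv_comp, yonedaEquiv_comp, Equiv.apply_symm_apply, Equiv.apply_symm_apply]
  refine ⟨γ', π₁, π₂, yonedaEquiv x, hπ, ?_, ?_⟩
  · exact (congrArg yonedaEquiv hx₁).trans (yonedaEquiv.apply_symm_apply x₁)
  · exact (congrArg yonedaEquiv hx₂).trans (yonedaEquiv.apply_symm_apply x₂)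

def Inst.restrict (n : Inst T p) {γ : T.Γ} (π : γ ⟶ n.obj.left) : Inst T p :=
  ⟨CostructuredArrow.mk (T.L.map π ≫ n.obj.hom), @mono_comp _ _ _ _ _ _ (T.monoL π) _ n.property⟩

def Inst.restrictHom (n : Inst T p) {γ : T.Γ} (π : γ ⟶ n.obj.left) : n.restrict π ⟶ n :=
  InducedCategory.homMk (CostructuredArrow.homMk π rfl)

variable (T p) in
def SpanRel (c : Cᵒᵖ) (u v : Σ n : Inst T p, ((DT T p).obj n).obj c) : Prop :=
  ∃ (n₀ : Inst T p) (e₁ : n₀ ⟶ u.1) (e₂ : n₀ ⟶ v.1) (x₀ : ((DT T p).obj n₀).obj c),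
    ((DT T p).map e₁).app c x₀ = u.2 ∧ ((DT T p).map e₂).app c x₀ = v.2

theorem spanRel_of_hom {c : Cᵒᵖ} {n n' : Inst T p} (e : n ⟶ n') (x : ((DT T p).obj n).obj c) :
    SpanRel T p c ⟨n, x⟩ ⟨n', ((DT T p).map e).app c x⟩ :=
  ⟨n, 𝟙 n, e, x, by simp, rfl⟩

theorem RuleSystem.Incremental.spanRel_of_map_eq (hT : T.Incremental) {c : Cᵒᵖ}
    {n₁ n₂ n : Inst T p} (e₁ : n₁ ⟶ n) (e₂ : n₂ ⟶ n)
    {x₁ : ((DT T p).obj n₁).obj c} {x₂ : ((DT T p).obj n₂).obj c}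
    (h : ((DT T p).map e₁).app c x₁ = ((DT T p).map e₂).app c x₂) :
    SpanRel T p c ⟨n₁, x₁⟩ ⟨n₂, x₂⟩ := by
  obtain ⟨γ, π₁, π₂, x, hπ, hx₁, hx₂⟩ := hT.exists_span_apply e₁.hom.left e₂.hom.left c x₁ x₂ h
  have hL : T.L.map π₂ ≫ n₂.obj.hom = T.L.map π₁ ≫ n₁.obj.hom := by
    rw [← CostructuredArrow.w e₁.hom, ← CostructuredArrow.w e₂.hom, ← T.L.map_comp_assoc,
      ← T.L.map_comp_assoc, hπ]
  exact ⟨n₁.restrict π₁, n₁.restrictHom π₁,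
    InducedCategory.homMk (CostructuredArrow.homMk π₂ hL), x, hx₁, hx₂⟩

theorem RuleSystem.Incremental.spanRel_equivalence (hT : T.Incremental) (c : Cᵒᵖ) :
    Equivalence (SpanRel T p c) where
  refl u := by simpa using spanRel_of_hom (𝟙 u.1) u.2
  symm := fun ⟨n₀, e₁, e₂, x₀, h₁, h₂⟩ => ⟨n₀, e₂, e₁, x₀, h₂, h₁⟩
  trans := by
    rintro u v w ⟨n₀, e₁, e₂, x₀, hu, hv⟩ ⟨n₀', e₁', e₂', x₀', hv', hw⟩
    obtain ⟨n, g, g', x, hx₀, hx₀'⟩ := hT.spanRel_of_map_eq e₂ e₁' (hv.trans hv'.symm)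
    refine ⟨n, g ≫ e₁, g' ≫ e₂', x, ?_, ?_⟩
    · rw [Functor.map_comp, NatTrans.comp_app_apply, hx₀, hu]
    · rw [Functor.map_comp, NatTrans.comp_app_apply, hx₀', hw]

theorem RuleSystem.Incremental.spanRel_of_eqvGen (hT : T.Incremental) {J : Type*} [Category J]
    (F : J ⥤ Inst T p) {c : Cᵒᵖ} {u v : Σ j, ((F ⋙ DT T p).obj j).obj c}
    (h : Relation.EqvGen ((F ⋙ DT T p) ⋙ (evaluation _ _).obj c).ColimitTypeRel u v) :
    SpanRel T p c ⟨F.obj u.1, u.2⟩ ⟨F.obj v.1, v.2⟩ := by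
  refine ((hT.spanRel_equivalence c).comap fun w => ⟨F.obj w.1, w.2⟩).eqvGen_iff.1
    (Relation.EqvGen.mono ?_ _ _ h)
  rintro ⟨j, x⟩ ⟨j', y⟩ ⟨g, hy⟩
  dsimp only at g hy
  rw [hy]
  exact spanRel_of_hom (F.map g) x

theorem InTilde.exists_hom_mem {M : Set (Inst T p)} {n : Inst T p} (h : InTilde M n) :
    ∃ m ∈ M, Nonempty (n ⟶ m) := by
  rcases h with hn | hm
  · exact ⟨n, hn, ⟨𝟙 n⟩⟩
  · exact hm

theorem InTilde.of_hom {M : Set (Inst T p)} {n₀ n : Inst T p} (e : n₀ ⟶ n) (h : InTilde M n) :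
    InTilde M n₀ :=
  let ⟨m, hm, ⟨g⟩⟩ := h.exists_hom_mem
  Or.inr ⟨m, hm, ⟨e ≫ g⟩⟩

theorem colimit_ι_app_DT_map_apply {M : Set (Inst T p)} (n : TildeCat T p M) {n₀ : Inst T p}
    (e : n₀ ⟶ n.1) {c : Cᵒᵖ} (x₀ : ((DT T p).obj n₀).obj c) :
    (colimit.ι (DTilde T p M) n).app c (((DT T p).map e).app c x₀) =
      (colimit.ι (DTilde T p M) ⟨n₀, n.2.of_hom e⟩).app c x₀ := by
  obtain ⟨m, hm, ⟨g⟩⟩ := n.2.exists_hom_mem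
  refine colimit_ι_app_sound' (j'' := ⟨m, Or.inl hm⟩) ⟨g, Or.inl hm⟩ ⟨e ≫ g, Or.inl hm⟩ ?_
  change ((DT T p).map g).app c _ = ((DT T p).map (e ≫ g)).app c x₀
  rw [Functor.map_comp, NatTrans.comp_app_apply]

theorem stmt8_general (T : RuleSystem C)
    (hinc : ∀ {γ₁ γ γ₂ : T.Γ} (i₁ : γ₁ ⟶ γ) (i₂ : γ₂ ⟶ γ) (c : C)
      (x₁ : yoneda.obj c ⟶ T.R.obj γ₁) (x₂ : yoneda.obj c ⟶ T.R.obj γ₂),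
      x₁ ≫ T.R.map i₁ = x₂ ≫ T.R.map i₂ →
      ∃ (γ' : T.Γ) (π₁ : γ' ⟶ γ₁) (π₂ : γ' ⟶ γ₂) (x : yoneda.obj c ⟶ T.R.obj γ'),
        π₁ ≫ i₁ = π₂ ≫ i₂ ∧ x ≫ T.R.map π₁ = x₁ ∧ x ≫ T.R.map π₂ = x₂)
    (p : GM C) (M M' : Set (Inst T p)) (hMM' : M ⊆ M')
    (f : colimit (DTilde T p M) ⟶ colimit (DTilde T p M'))
    (hf : ∀ n : TildeCat T p M,
      colimit.ι (DTilde T p M) n ≫ f =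
        colimit.ι (DTilde T p M') ⟨n.1, inTilde_mono hMM' n.2⟩) :
    Mono f := by
  suffices ∀ c, Function.Injective (f.app c) from
    @NatTrans.mono_of_mono_app _ _ _ _ _ _ f fun c => (mono_iff_injective _).2 (this c)
  intro c a b hab
  obtain ⟨n₁, x₁, rfl⟩ := colimit_ι_app_jointly_surjective _ c a
  obtain ⟨n₂, x₂, rfl⟩ := colimit_ι_app_jointly_surjective _ c b
  rw [← NatTrans.comp_app_apply, ← NatTrans.comp_app_apply, hf, hf] at hab
  obtain ⟨n₀, e₁, e₂, x₀, hx₁, hx₂⟩ :=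
    RuleSystem.Incremental.spanRel_of_eqvGen @hinc (tildeIncl T p M')
      (eqvGen_of_colimit_ι_app_eq hab)
  dsimp only at e₁ e₂ hx₁ hx₂
  rw [← hx₁, ← hx₂]
  exact (colimit_ι_app_DT_map_apply n₁ e₁ x₀).trans (colimit_ι_app_DT_map_apply n₂ e₂ x₀).symm

/-- an incremental rule system is accretive at every presheaf `p`: for any two
partial decompositions `M ⊆ M'` of `p`, the induced morphism `T̃_p(M) ⟶ T̃_p(M')` — the
unique morphism sending the colimit component of `T̃_p(M)` at each object `n` of `M̃` to the
component of `T̃_p(M')` at `n` — is a monomorphism. -/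
theorem stmt8 (T : RuleSystem C)
    (hinc : ∀ {γ₁ γ γ₂ : T.Γ} (i₁ : γ₁ ⟶ γ) (i₂ : γ₂ ⟶ γ) (c : C)
      (x₁ : yoneda.obj c ⟶ T.R.obj γ₁) (x₂ : yoneda.obj c ⟶ T.R.obj γ₂),
      x₁ ≫ T.R.map i₁ = x₂ ≫ T.R.map i₂ →
      ∃ (γ' : T.Γ) (π₁ : γ' ⟶ γ₁) (π₂ : γ' ⟶ γ₂) (x : yoneda.obj c ⟶ T.R.obj γ'),
        π₁ ≫ i₁ = π₂ ≫ i₂ ∧ x ≫ T.R.map π₁ = x₁ ∧ x ≫ T.R.map π₂ = x₂)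
    (p : GM C) (M M' : Set (Inst T p)) (hMM' : M ⊆ M')
    (hMmax : ∀ n ∈ M, MaximalInst n) (hM'max : ∀ n ∈ M', MaximalInst n)
    (hMconn : IsConnected (TildeCat T p M)) (hM'conn : IsConnected (TildeCat T p M'))
    (f : colimit (DTilde T p M) ⟶ colimit (DTilde T p M'))
    (hf : ∀ n : TildeCat T p M,
      colimit.ι (DTilde T p M) n ≫ f =
        colimit.ι (DTilde T p M') ⟨n.1, inTilde_mono hMM' n.2⟩) :
    Mono f :=
  stmt8_general T hinc p M M' hMM' f hf
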